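/- Under the near point lighting model on the unit sphere with light at E (d = ‖E‖ > 1), and under the parallel lighting model with direction l parallel to E, for any two lit points p and q: B^apl_p < B^apl_q ↔ B^npl_p < B^npl_q (and likewise for = and >). That is, the parallel-lighting intensity and the near-point-lighting intensity induce the same ordering on lit sphere points. -/

import Mathlib

/-!
On the unit sphere both intensities depend on the point `X` only through `t = ⟪X, E⟫`
(that is, `d cos β`): the parallel one is `c t`, and since `‖X‖ = 1` the near-point one is
`e (t - 1) / (d² + 1 - 2t)^{3/2}`. On the lit range `1 < t`, `2t < d² + 1` the numerator
increases and the positive denominator decreases with `t`, so both are strictly increasing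
functions of `t` and therefore order lit points in the same way.
-/

open RealInnerProductSpace

noncomputable def nplProfile (e d t : ℝ) : ℝ :=
  e * (t - 1) / √(d ^ 2 + 1 - 2 * t) ^ 3

def nplLitRange (d : ℝ) : Set ℝ :=
  {t | 1 < t ∧ 2 * t < d ^ 2 + 1}

theorem strictMonoOn_nplProfile {e : ℝ} (he : 0 < e) (d : ℝ) :
    StrictMonoOn (nplProfile e d) (nplLitRange d) := by
  rintro a ⟨ha, -⟩ b ⟨-, hb⟩ hab
  have hroot : √(d ^ 2 + 1 - 2 * b) ≤ √(d ^ 2 + 1 - 2 * a) :=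
    Real.sqrt_le_sqrt (by linarith)
  have hroot_pos : 0 < √(d ^ 2 + 1 - 2 * b) := Real.sqrt_pos.mpr (by linarith)
  unfold nplProfile
  exact div_lt_div₀ (by gcongr) (by gcongr) (by nlinarith) (by positivity)

section UnitVector

variable {F : Type*} [NormedAddCommGroup F] [InnerProductSpace ℝ F] {E X : F}

theorem inner_sub_self_of_norm_eq_one (hX : ‖X‖ = 1) : ⟪X, E - X⟫ = ⟪X, E⟫ - 1 := by
  rw [inner_sub_right, real_inner_self_eq_norm_sq, hX, one_pow]

theorem norm_sub_sq_of_norm_eq_one (hX : ‖X‖ = 1) :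
    ‖E - X‖ ^ 2 = ‖E‖ ^ 2 + 1 - 2 * ⟪X, E⟫ := by
  rw [norm_sub_sq_real, hX, real_inner_comm]
  ring

theorem inner_mem_nplLitRange (hX : ‖X‖ = 1) (hlit : 0 < ⟪X, E - X⟫) :
    ⟪X, E⟫ ∈ nplLitRange ‖E‖ := by
  rw [inner_sub_self_of_norm_eq_one hX] at hlit
  have hEX : E - X ≠ 0 := by
    intro h
    rw [sub_eq_zero.mp h, real_inner_self_eq_norm_sq, hX] at hlit
    norm_num at hlit
  have hsq := norm_sub_sq_of_norm_eq_one (E := E) hX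
  have hpos : 0 < ‖E - X‖ ^ 2 := by positivity
  exact ⟨by linarith, by linarith⟩

theorem npl_eq_nplProfile (e : ℝ) (hX : ‖X‖ = 1) :
    e * ⟪X, E - X⟫ / ‖E - X‖ ^ 3 = nplProfile e ‖E‖ ⟪X, E⟫ := by
  rw [nplProfile, inner_sub_self_of_norm_eq_one hX, ← norm_sub_sq_of_norm_eq_one hX,
    Real.sqrt_sq (norm_nonneg _)]

end UnitVector

theorem stmt_12_general (e c : ℝ) (he : 0 < e) (hc : 0 < c)
    (E l Xp Xq : EuclideanSpace ℝ (Fin 3))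
    (hl : l = c • E)
    (hXp : ‖Xp‖ = 1) (hXq : ‖Xq‖ = 1)
    (hlitp : 0 < (inner ℝ Xp (E - Xp) : ℝ)) (hlitq : 0 < (inner ℝ Xq (E - Xq) : ℝ))
    (Baplp Baplq Bnplp Bnplq : ℝ)
    (hBaplp : Baplp = (inner ℝ Xp l : ℝ)) (hBaplq : Baplq = (inner ℝ Xq l : ℝ))
    (hBnplp : Bnplp = e * (inner ℝ Xp (E - Xp) : ℝ) / ‖E - Xp‖ ^ 3)
    (hBnplq : Bnplq = e * (inner ℝ Xq (E - Xq) : ℝ) / ‖E - Xq‖ ^ 3) :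
    (Baplp < Baplq ↔ Bnplp < Bnplq) ∧
    (Baplp = Baplq ↔ Bnplp = Bnplq) ∧
    (Baplq < Baplp ↔ Bnplq < Bnplp) := by
  have hp := inner_mem_nplLitRange hXp hlitp
  have hq := inner_mem_nplLitRange hXq hlitq
  have hapl : StrictMonoOn (c * ·) (nplLitRange ‖E‖) :=
    (strictMono_mul_left_of_pos hc).strictMonoOn _
  have hnpl := strictMonoOn_nplProfile he ‖E‖
  subst hl hBaplp hBaplq hBnplp hBnplq
  simp only [real_inner_smul_right, npl_eq_nplProfile e hXp, npl_eq_nplProfile e hXq]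
  exact ⟨(hapl.lt_iff_lt hp hq).trans (hnpl.lt_iff_lt hp hq).symm,
    (hapl.eq_iff_eq hp hq).trans (hnpl.eq_iff_eq hp hq).symm,
    (hapl.lt_iff_lt hq hp).trans (hnpl.lt_iff_lt hq hp).symm⟩

/-- On lit points of the unit sphere, the parallel-lighting
intensity `B^apl X = ⟨X, l⟩` (with `l` parallel to the light position `E`)
and the near-point-lighting intensity `B^npl X = e·⟨X, E−X⟩/‖E−X‖³` induce
the same ordering. -/
theorem stmt_12 (e c : ℝ) (he : 0 < e) (hc : 0 < c)
    (E l Xp Xq : EuclideanSpace ℝ (Fin 3))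
    (hd : 1 < ‖E‖) (hl : l = c • E)
    (hXp : ‖Xp‖ = 1) (hXq : ‖Xq‖ = 1)
    (hlitp : 0 < (inner ℝ Xp (E - Xp) : ℝ)) (hlitq : 0 < (inner ℝ Xq (E - Xq) : ℝ))
    (Baplp Baplq Bnplp Bnplq : ℝ)
    (hBaplp : Baplp = (inner ℝ Xp l : ℝ)) (hBaplq : Baplq = (inner ℝ Xq l : ℝ))
    (hBnplp : Bnplp = e * (inner ℝ Xp (E - Xp) : ℝ) / ‖E - Xp‖ ^ 3)
    (hBnplq : Bnplq = e * (inner ℝ Xq (E - Xq) : ℝ) / ‖E - Xq‖ ^ 3) :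
    (Baplp < Baplq ↔ Bnplp < Bnplq) ∧
    (Baplp = Baplq ↔ Bnplp = Bnplq) ∧
    (Baplq < Baplp ↔ Bnplq < Bnplp) :=
  stmt_12_general e c he hc E l Xp Xq hl hXp hXq hlitp hlitq Baplp Baplq Bnplp Bnplq hBaplp hBaplq
    hBnplp hBnplq
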